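/- Let K be a field of characteristic zero, n ≥ 4, and let D be a derivation of T(n) of the canonical form: D(N_{12}) = λ_1 N_{12} + c_1 N_{2n}, D(N_{j(j+1)}) = λ_j N_{j(j+1)} + c_j N_{1n} for 2 ≤ j ≤ n−2, D(N_{(n−1)n}) = λ_{n−1} N_{(n−1)n} + c_{n−1} N_{1(n−1)}, and D(N_{ik}) = (Σ_{p=i}^{k−1} λ_p) N_{ik} for k − i ≥ 2. If D has at least n−1 nonzero off-diagonal parameters, i.e., c_j ≠ 0 for all j = 1,…,n−1, and the form of D cannot be simplified further—meaning λ_1 = λ_2 + ⋯ + λ_{n−1}, λ_1 + ⋯ + λ_{n−1} = λ_j for 2 ≤ j ≤ n−2, and λ_1 + ⋯ + λ_{n−2} = λ_{n−1}—then λ_p = 0 for all p and D is nilpotent as a K-linear endomorphism of T(n). Consequently, a non-nilpotent derivation in canonical form has at most n−2 nonzero off-diagonal parameters. -/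

import Mathlib

/-!
Put `S = λ_1 + ⋯ + λ_{n-1}`. The system says `S = 2λ_1`, `S = 2λ_{n-1}` and `S = λ_j` for
`2 ≤ j ≤ n-2`, so `S = S/2 + (n-3) S + S/2`; hence `S = 0` in characteristic zero and every `λ_p`
vanishes. Then `D` kills every `N_{ik}` with `k - i ≥ 2` and maps every `N_{j(j+1)}` to a multiple
of such an element, so `D² = 0`.
-/

open Matrix

attribute [local instance 100] LieRing.ofAssociativeRing

/-- The Lie algebra `T(n)` of strictly upper triangular `n × n` matrices over `K`. -/
def strictUpper (n : ℕ) (K : Type*) [Field K] :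
    LieSubalgebra K (Matrix (Fin n) (Fin n) K) where
  carrier := {M | ∀ i j : Fin n, j ≤ i → M i j = 0}
  add_mem' := by
    intro a b ha hb i j hij
    simp [Matrix.add_apply, ha i j hij, hb i j hij]
  zero_mem' := by intro i j hij; simp
  smul_mem' := by
    intro c a ha i j hij
    simp [Matrix.smul_apply, ha i j hij]
  lie_mem' := by
    intro a b ha hb i j hij
    have hmul : ∀ x y : Matrix (Fin n) (Fin n) K,
        (∀ i j : Fin n, j ≤ i → x i j = 0) → (∀ i j : Fin n, j ≤ i → y i j = 0) →
        (x * y) i j = 0 := by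
      intro x y hx hy
      rw [Matrix.mul_apply]
      apply Finset.sum_eq_zero
      intro s _
      rcases le_or_gt s i with h | h
      · rw [hx i s h, zero_mul]
      · rw [hy s j (hij.trans h.le), mul_zero]
    rw [Ring.lie_def, Matrix.sub_apply, hmul a b ha hb, hmul b a hb ha, sub_zero]

/-- The standard basis element `N_{ik}` (with `i < k`) of `T(n)`. -/
def stdN {n : ℕ} {K : Type*} [Field K] {i k : Fin n} (h : i < k) :
    strictUpper n K :=
  ⟨Matrix.single i k 1, by
    intro a b hba
    simp only [Matrix.single, Matrix.of_apply, ite_eq_right_iff, one_ne_zero]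
    rintro ⟨rfl, rfl⟩
    exact absurd h (not_lt.mpr hba)⟩

/-- The basis element `N_{ik}` of `T(n)`, indexed by natural numbers (`0`-based). -/
def natN (n : ℕ) (K : Type*) [Field K] (i k : ℕ) (h1 : i < k) (h2 : k < n) :
    strictUpper n K :=
  stdN (i := ⟨i, h1.trans h2⟩) (k := ⟨k, h2⟩) (Fin.mk_lt_mk.mpr h1)

namespace strictUpper

variable {n : ℕ} {K : Type*} [Field K]

theorem eq_sum_stdN (x : strictUpper n K) :
    x = ∑ p : Fin n × Fin n,
      if h : p.1 < p.2 then (x : Matrix (Fin n) (Fin n) K) p.1 p.2 • stdN h else 0 := by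
  apply Subtype.ext
  rw [AddSubmonoidClass.coe_finsetSum, Fintype.sum_prod_type]
  conv_lhs => rw [Matrix.matrix_eq_sum_single (x : Matrix (Fin n) (Fin n) K)]
  refine Finset.sum_congr rfl fun i _ => Finset.sum_congr rfl fun k _ => ?_
  split_ifs with h
  · simp [stdN]
  · rw [x.2 i k (not_lt.1 h), Matrix.single_zero, ZeroMemClass.coe_zero]

theorem linearMap_ext_natN {M : Type*} [AddCommGroup M] [Module K M]
    {f g : strictUpper n K →ₗ[K] M}
    (h : ∀ i k (hik : i < k) (hk : k < n), f (natN n K i k hik hk) = g (natN n K i k hik hk)) :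
    f = g := by
  refine LinearMap.ext fun x => ?_
  rw [eq_sum_stdN x, map_sum, map_sum]
  refine Finset.sum_congr rfl fun p _ => ?_
  split_ifs with hp
  · rw [map_smul, map_smul]
    exact congrArg _ (h p.1 p.2 hp p.2.isLt)
  · rw [map_zero, map_zero]

end strictUpper

open Finset in
theorem diagonal_params_eq_zero {K : Type*} [Field K] [CharZero K] {n : ℕ} (hn : 4 ≤ n)
    {lam : ℕ → K} (hs1 : lam 0 = ∑ j ∈ Ico 1 (n - 1), lam j)
    (hs2 : ∀ j, 1 ≤ j → j ≤ n - 3 → ∑ p ∈ range (n - 1), lam p = lam j)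
    (hs3 : ∑ p ∈ range (n - 2), lam p = lam (n - 2)) :
    ∀ p ≤ n - 2, lam p = 0 := by
  obtain ⟨m, rfl⟩ : ∃ m, n = m + 4 := ⟨n - 4, by omega⟩
  simp only [show m + 4 - 1 = m + 3 by omega, show m + 4 - 2 = m + 2 by omega,
    show m + 4 - 3 = m + 1 by omega] at hs1 hs2 hs3 ⊢
  set S := ∑ p ∈ range (m + 3), lam p with hS
  have hsplit : S = lam 0 + ∑ j ∈ Ico 1 (m + 2), lam j + lam (m + 2) := by
    rw [hS, range_eq_Ico, sum_eq_sum_Ico_succ_bot (by omega), sum_Ico_succ_top (by omega),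
      add_assoc]
  have hmid : ∑ j ∈ Ico 1 (m + 2), lam j = (m + 1) * S := by
    rw [sum_congr rfl fun j hj => (hs2 j (mem_Ico.1 hj).1 (by grind)).symm, sum_const,
      Nat.card_Ico, nsmul_eq_mul]
    push_cast; ring
  have hfirst : S = 2 * lam 0 := by
    rw [hS, range_eq_Ico, sum_eq_sum_Ico_succ_bot (by omega), ← hs1]; ring
  have hlast : S = 2 * lam (m + 2) := by
    rw [hS, sum_range_succ, hs3]; ring
  have hS0 : S = 0 := by
    have : ((m : K) + 1) * S = 0 := by linear_combination hfirst / 2 + hlast / 2 - hsplit - hmid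
    exact (mul_eq_zero.1 this).resolve_left (by norm_cast)
  intro p hp
  rcases (by omega : p = 0 ∨ (1 ≤ p ∧ p ≤ m + 1) ∨ p = m + 2) with rfl | ⟨hp1, hp2⟩ | rfl
  · linear_combination hS0 / 2 - hfirst / 2
  · rw [← hs2 p hp1 hp2, hS0]
  · linear_combination hS0 / 2 - hlast / 2

/-- Indices are $0$-based: $λ_p$, $c_p$ of the paper are `lam (p-1)`, `c (p-1)`. -/
theorem canonical_derivation_all_offdiag_nonzero_nilpotent
    (K : Type*) [Field K] [CharZero K] (n : ℕ) (hn : 4 ≤ n)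
    (D : LieDerivation K (strictUpper n K) (strictUpper n K))
    (lam c : ℕ → K)
    (h1 : D (natN n K 0 1 (by omega) (by omega)) =
      lam 0 • natN n K 0 1 (by omega) (by omega) +
        c 0 • natN n K 1 (n - 1) (by omega) (by omega))
    (h2 : ∀ (j : ℕ) (hj1 : 1 ≤ j) (hj2 : j ≤ n - 3),
      D (natN n K j (j + 1) (by omega) (by omega)) =
        lam j • natN n K j (j + 1) (by omega) (by omega) +
          c j • natN n K 0 (n - 1) (by omega) (by omega))
    (h3 : D (natN n K (n - 2) (n - 1) (by omega) (by omega)) =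
      lam (n - 2) • natN n K (n - 2) (n - 1) (by omega) (by omega) +
        c (n - 2) • natN n K 0 (n - 2) (by omega) (by omega))
    (h4 : ∀ (i k : ℕ) (hik : i + 2 ≤ k) (hk : k < n),
      D (natN n K i k (by omega) hk) =
        (∑ p ∈ Finset.Ico i k, lam p) • natN n K i k (by omega) hk)
    (hs1 : lam 0 = ∑ j ∈ Finset.Ico 1 (n - 1), lam j)
    (hs2 : ∀ (j : ℕ), 1 ≤ j → j ≤ n - 3 → ∑ p ∈ Finset.range (n - 1), lam p = lam j)
    (hs3 : ∑ p ∈ Finset.range (n - 2), lam p = lam (n - 2)) :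
    (∀ p ≤ n - 2, lam p = 0) ∧
      IsNilpotent (LieDerivation.toLinearMap D : Module.End K (strictUpper n K)) := by
  have hlam := diagonal_params_eq_zero hn hs1 hs2 hs3
  have hlong : ∀ i k (hik : i + 2 ≤ k) (hk : k < n), D (natN n K i k (by omega) hk) = 0 := by
    intro i k hik hk
    rw [h4 i k hik hk, Finset.sum_eq_zero fun p hp => hlam p (by grind), zero_smul]
  have hsq : ∀ {x y : strictUpper n K} {a b : K}, D x = a • x + b • y → a = 0 → D y = 0 →
      D (D x) = 0 := by
    rintro x y a b hx rfl hy
    rw [hx, zero_smul, zero_add, map_smul, hy, smul_zero]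
  refine ⟨hlam, 2, strictUpper.linearMap_ext_natN fun i k hik hk => ?_⟩
  change D (D (natN n K i k hik hk)) = 0
  by_cases hgap : i + 2 ≤ k
  · rw [hlong i k hgap hk, map_zero]
  rcases (by omega : i = 0 ∨ (1 ≤ i ∧ i ≤ n - 3) ∨ i = n - 2) with rfl | ⟨hi1, hi2⟩ | rfl
  · obtain rfl : k = 1 := by omega
    exact hsq h1 (hlam 0 (by omega)) (hlong 1 (n - 1) (by omega) (by omega))
  · obtain rfl : k = i + 1 := by omega
    exact hsq (h2 i hi1 hi2) (hlam i (by omega)) (hlong 0 (n - 1) (by omega) (by omega))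
  · obtain rfl : k = n - 1 := by omega
    exact hsq h3 (hlam (n - 2) le_rfl) (hlong 0 (n - 2) (by omega) (by omega))
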